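/- A family {K_i : i ∈ I} of convex cones in a Banach space X has the normal property if and only if it has the closed intersection property and there exists η > 0 such that {K_i° : i ∈ I} has the extended Jameson property (G_η) in X*. -/

import Mathlib

open Set Metric
open scoped Pointwise

noncomputable section

/-- The recession cone `0⁺A = {x | A + t • x ⊆ A for all t ≥ 0}`. -/
def recCone {X : Type*} [AddCommGroup X] [Module ℝ X] (A : Set X) : Set X :=
  {x | ∀ t : ℝ, 0 ≤ t → ∀ a ∈ A, a + t • x ∈ A}

/-- The inverse sum `B₁ # B₂`. -/
def invSum {X : Type*} [AddCommGroup X] [Module ℝ X] (B₁ B₂ : Set X) : Set X :=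
  (⋃ t ∈ Set.Ioo (0:ℝ) 1, (t • B₁ ∩ (1 - t) • B₂)) ∪ (B₁ ∩ recCone B₂) ∪ (B₂ ∩ recCone B₁)

/-- The polar `A° = {x* | ⟨x*, x⟩ ≤ 1 ∀ x ∈ A}` of a set in `X`, a subset of the dual. -/
def pol {X : Type*} [NormedAddCommGroup X] [NormedSpace ℝ X] (A : Set X) :
    Set (X →L[ℝ] ℝ) := {f | ∀ x ∈ A, f x ≤ 1}

/-- The dual cone (negative polar) `A^⊖ = {x* | ⟨x*, x⟩ ≤ 0 ∀ x ∈ A}`. -/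
def dCone {X : Type*} [NormedAddCommGroup X] [NormedSpace ℝ X] (A : Set X) :
    Set (X →L[ℝ] ℝ) := {f | ∀ x ∈ A, f x ≤ 0}

/-- The weak* closure of a set of continuous linear functionals. -/
def wcl {X : Type*} [NormedAddCommGroup X] [NormedSpace ℝ X]
    (S : Set (X →L[ℝ] ℝ)) : Set (X →L[ℝ] ℝ) :=
  {f | StrongDual.toWeakDual (𝕜 := ℝ) (E := X) f ∈
    closure (StrongDual.toWeakDual (𝕜 := ℝ) (E := X) '' S)}

/-- The set of all finite sums `Σ_{i ∈ I₀} x_i` with `x_i ∈ P i`, `I₀ ⊆ I` finite. -/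
def finSums {X : Type*} [NormedAddCommGroup X] [NormedSpace ℝ X] {I : Type*}
    (P : I → Set (X →L[ℝ] ℝ)) : Set (X →L[ℝ] ℝ) :=
  {g | ∃ (s : Finset I) (x : I → (X →L[ℝ] ℝ)), (∀ i ∈ s, x i ∈ P i) ∧ g = ∑ i ∈ s, x i}

/-- The extended Jameson property `(G_η)`: every `f` in the weak* closure of the set of
finite sums of the `P i` is a weak* limit (i.e. lies in the weak* closure) of finite sums
`Σ_{i ∈ s} x_i`, `x_i ∈ P i`, with `Σ_{i ∈ s} ‖x_i‖ ≤ (1/η) ‖f‖`. -/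
def propG {X : Type*} [NormedAddCommGroup X] [NormedSpace ℝ X] {I : Type*}
    (P : I → Set (X →L[ℝ] ℝ)) (η : ℝ) : Prop :=
  ∀ f ∈ wcl (finSums P),
    f ∈ wcl {g | ∃ (s : Finset I) (x : I → (X →L[ℝ] ℝ)),
      (∀ i ∈ s, x i ∈ P i) ∧ g = ∑ i ∈ s, x i ∧ ∑ i ∈ s, ‖x i‖ ≤ (1 / η) * ‖f‖}

/-- The normal cone `N(C, x) = {x* | ⟨x*, c − x⟩ ≤ 0 ∀ c ∈ C}`. -/
def ncone {X : Type*} [NormedAddCommGroup X] [NormedSpace ℝ X] (C : Set X) (x : X) :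
    Set (X →L[ℝ] ℝ) := {f | ∀ c ∈ C, f (c - x) ≤ 0}

/-- The conical hull of a convex set `S`: `cone S = {t • s | t ≥ 0, s ∈ S}`. -/
def coneHull {X : Type*} [AddCommGroup X] [Module ℝ X] (S : Set X) : Set X :=
  {y | ∃ t : ℝ, 0 ≤ t ∧ ∃ s ∈ S, y = t • s}

end


/-!
For cones the normal property is homogeneous: a point within `δη` of every `K i` is within `δ`
of `⋂ i, K i`. Letting `δ → 0` gives the closed intersection property. The polar of
`K i + closedBall 0 r` consists of elements of `K i°` of norm at most `1 / r`; so if `f` could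
not be weak* approximated by sums from the `K i°` of total norm `≤ ‖f‖ / η`, a point separating
`f` from those sums (Hahn–Banach in the weak* topology) would lie near every `K i`, hence near
`⋂ i, K i`, where `f ≤ 0`, and `f` would be too small at that point.
Conversely, the closed intersection property and the bipolar theorem make every functional that
is `≤ 0` on `⋂ i, K i` a weak* limit of finite sums from the `K i°`. A point `x` near every `K i`
but far from `⋂ i, K i` is separated from it by such a functional `f` with `‖f‖ ≤ 1 = f x`, and
a sum of total norm `≤ 1 / η` approximating `f` at `x` is at most `1 / 2` there.
-/

def IsCone {E : Type*} [AddCommGroup E] [Module ℝ E] (K : Set E) : Prop :=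
  ∀ t : ℝ, 0 ≤ t → t • K ⊆ K

/-- The set occurring in `propG`, with the bound `(1 / η) * ‖f‖` replaced by `c`. -/
def boundedFinSums {X : Type*} [NormedAddCommGroup X] [NormedSpace ℝ X] {I : Type*}
    (P : I → Set (X →L[ℝ] ℝ)) (c : ℝ) : Set (X →L[ℝ] ℝ) :=
  {g | ∃ (s : Finset I) (x : I → (X →L[ℝ] ℝ)),
    (∀ i ∈ s, x i ∈ P i) ∧ g = ∑ i ∈ s, x i ∧ ∑ i ∈ s, ‖x i‖ ≤ c}

namespace IsCone

variable {E : Type*} [AddCommGroup E] [Module ℝ E] {K : Set E}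

theorem smul_mem (hK : IsCone K) {t : ℝ} (ht : 0 ≤ t) {x : E} (hx : x ∈ K) : t • x ∈ K :=
  hK t ht (smul_mem_smul_set hx)

theorem iInter {I : Type*} {K : I → Set E} (hK : ∀ i, IsCone (K i)) : IsCone (⋂ i, K i) :=
  fun _ ht _ ⟨_, hx, hxy⟩ => mem_iInter.2 fun i => hxy ▸ (hK i).smul_mem ht (mem_iInter.1 hx i)

theorem convex (hK : IsCone K) (hadd : K + K ⊆ K) : Convex ℝ K :=
  fun _ hx _ hy _ _ ha hb _ => hadd (add_mem_add (hK.smul_mem ha hx) (hK.smul_mem hb hy))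

theorem apply_nonpos_of_le (hK : IsCone K) (f : E →ₗ[ℝ] ℝ) {c : ℝ} (hf : ∀ k ∈ K, f k ≤ c)
    {k : E} (hk : k ∈ K) : f k ≤ 0 := by
  by_contra! hpos
  have := hf _ (hK.smul_mem (div_pos (by positivity : (0:ℝ) < |c| + 1) hpos).le hk)
  rw [map_smul, smul_eq_mul, div_mul_cancel₀ _ hpos.ne'] at this
  linarith [le_abs_self c]

end IsCone

theorem closure_subset_add_closedBall {X : Type*} [NormedAddCommGroup X] (A : Set X) {r : ℝ}
    (hr : 0 < r) : closure A ⊆ A + closedBall 0 r :=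
  calc closure A ⊆ thickening r A := closure_subset_thickening hr A
    _ = A + ball 0 r := (add_ball_zero r A).symm
    _ ⊆ A + closedBall 0 r := add_subset_add_left ball_subset_closedBall

theorem closure_add_closedBall_subset {X : Type*} [NormedAddCommGroup X] [NormedSpace ℝ X]
    (A : Set X) {r : ℝ} (hr : 0 < r) :
    closure (A + closedBall 0 r) ⊆ A + closedBall 0 (2 * r) :=
  calc closure (A + closedBall 0 r) ⊆ thickening r (A + closedBall 0 r) :=
        closure_subset_thickening hr _
    _ = A + (closedBall 0 r + ball 0 r) := by rw [← add_ball_zero, add_assoc]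
    _ = A + ball 0 (2 * r) := by rw [closedBall_add_ball hr.le hr, add_zero, two_mul]
    _ ⊆ A + closedBall 0 (2 * r) := add_subset_add_left ball_subset_closedBall

section Polar

variable {X : Type*} [NormedAddCommGroup X] [NormedSpace ℝ X]

theorem pol_anti {A B : Set X} (h : A ⊆ B) : pol B ⊆ pol A :=
  fun _ hg x hx => hg x (h hx)

theorem IsCone.pol_subset_dCone {K : Set X} (hK : IsCone K) : pol K ⊆ dCone K :=
  fun g hg _ hk => hK.apply_nonpos_of_le (g : X →ₗ[ℝ] ℝ) hg hk

theorem isCone_dCone (A : Set X) : IsCone (dCone A) := by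
  rintro t ht _ ⟨g, hg, rfl⟩ x hx
  simpa using mul_nonpos_of_nonneg_of_nonpos ht (hg x hx)

theorem convex_dCone (A : Set X) : Convex ℝ (dCone A) := by
  intro f hf g hg a b ha hb _ x hx
  simpa using add_nonpos (mul_nonpos_of_nonneg_of_nonpos ha (hf x hx))
    (mul_nonpos_of_nonneg_of_nonpos hb (hg x hx))

theorem zero_mem_dCone (A : Set X) : (0 : X →L[ℝ] ℝ) ∈ dCone A :=
  fun _ _ => le_rfl

theorem mem_dCone_closure {A : Set X} {f : X →L[ℝ] ℝ} (hf : f ∈ dCone A) :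
    f ∈ dCone (closure A) :=
  closure_minimal hf (isClosed_le f.continuous continuous_const)

theorem norm_le_of_mem_pol_ball {r : ℝ} (hr : 0 < r) {g : X →L[ℝ] ℝ} (hg : g ∈ pol (ball 0 r)) :
    ‖g‖ ≤ r⁻¹ := by
  have hpolar : g ∈ StrongDual.polar ℝ (ball (0 : X) r) := by
    refine (StrongDual.mem_polar_iff ℝ _).2 fun z hz => abs_le.2 ⟨?_, hg z hz⟩
    have := hg (-z) (by simpa using hz)
    rw [map_neg] at this
    linarith
  simpa [NormedSpace.polar_ball hr] using hpolar

theorem apply_le_of_mem_dCone_add_closedBall {K : Set X} {g : X →L[ℝ] ℝ} (hg : g ∈ dCone K)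
    {r : ℝ} {x : X} (hx : x ∈ K + closedBall 0 r) : g x ≤ ‖g‖ * r := by
  obtain ⟨k, hk, b, hb, rfl⟩ := hx
  calc g (k + b) = g k + g b := map_add g k b
    _ ≤ 0 + ‖g‖ * ‖b‖ := add_le_add (hg k hk) ((le_abs_self _).trans (g.le_opNorm b))
    _ ≤ ‖g‖ * r := by
        simpa using mul_le_mul_of_nonneg_left (mem_closedBall_zero_iff.1 hb) (norm_nonneg g)

theorem mem_closure_of_forall_mem_pol {A : Set X} (hA : Convex ℝ A) (h0 : (0 : X) ∈ A) {x : X}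
    (hx : ∀ g ∈ pol A, g x ≤ 1) : x ∈ closure A := by
  by_contra hxA
  obtain ⟨g, u, hgA, hux⟩ := geometric_hahn_banach_closed_point hA.closure isClosed_closure hxA
  have hu : 0 < u := by simpa using hgA 0 (subset_closure h0)
  have := hx (u⁻¹ • g) fun a ha => by
    simpa [inv_mul_le_iff₀ hu] using (hgA a (subset_closure ha)).le
  simp only [smul_apply, smul_eq_mul, inv_mul_le_iff₀ hu, mul_one] at this
  linarith

theorem IsCone.mem_closure_of_forall_mem_dCone {K : Set X} (hK : IsCone K) (hKc : Convex ℝ K)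
    (h0 : (0 : X) ∈ K) {x : X} (hx : ∀ g ∈ dCone K, g x ≤ 0) : x ∈ closure K :=
  mem_closure_of_forall_mem_pol hKc h0 fun g hg => (hx g (hK.pol_subset_dCone hg)).trans zero_le_one

theorem exists_mem_pol_apply_eq_one {U : Set X} (hU : IsOpen U) (hUc : Convex ℝ U)
    (h0 : (0 : X) ∈ U) {x : X} (hx : x ∉ U) : ∃ g ∈ pol U, g x = 1 := by
  obtain ⟨f, hf⟩ := geometric_hahn_banach_open_point hUc hU hx
  have hfx : 0 < f x := by simpa using hf 0 h0
  refine ⟨(f x)⁻¹ • f, fun a ha => ?_, by simp [hfx.ne']⟩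
  simpa [inv_mul_le_iff₀ hfx] using (hf a ha).le

theorem IsCone.smul_mem_add_closedBall {K : Set X} (hK : IsCone K) {t r : ℝ} (ht : 0 ≤ t) {x : X}
    (hx : x ∈ K + closedBall 0 r) : t • x ∈ K + closedBall 0 (t * r) := by
  obtain ⟨k, hk, b, hb, rfl⟩ := hx
  refine ⟨t • k, hK.smul_mem ht hk, t • b, ?_, (smul_add t k b).symm⟩
  rw [mem_closedBall_zero_iff, norm_smul, Real.norm_of_nonneg ht]
  exact mul_le_mul_of_nonneg_left (mem_closedBall_zero_iff.1 hb) ht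

theorem IsCone.mem_closure_add_closedBall_of_forall_apply_le {K : Set X} (hK : IsCone K)
    (hKc : Convex ℝ K) (h0 : (0 : X) ∈ K) {c u : ℝ} (hc : 0 < c) (hu : 0 < u) {x : X}
    (hx : ∀ g ∈ dCone K, ‖g‖ ≤ c → g x ≤ u) : x ∈ closure (K + closedBall 0 (u / c)) := by
  have hr : 0 < u / c := by positivity
  refine mem_closure_of_forall_mem_pol (hKc.add (convex_closedBall _ _))
    ⟨0, h0, 0, mem_closedBall_self hr.le, zero_add 0⟩ fun g hg => ?_
  have hgK : g ∈ dCone K :=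
    hK.pol_subset_dCone (pol_anti (subset_add_left _ (mem_closedBall_self hr.le)) hg)
  have hgn : ‖g‖ ≤ (u / c)⁻¹ := norm_le_of_mem_pol_ball hr
    (pol_anti ((subset_add_right _ h0).trans' ball_subset_closedBall) hg)
  have hug := hx (u • g) ((isCone_dCone K).smul_mem hu.le hgK) <| calc
    ‖u • g‖ = u * ‖g‖ := by rw [norm_smul, Real.norm_of_nonneg hu.le]
    _ ≤ u * (u / c)⁻¹ := by gcongr
    _ = c := by field_simp
  rw [smul_apply, smul_eq_mul] at hug
  nlinarith

end Polar

section WeakStar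

variable {X : Type*} [NormedAddCommGroup X] [NormedSpace ℝ X] {S : Set (X →L[ℝ] ℝ)}
  {f : X →L[ℝ] ℝ}

theorem mem_wcl_iff : f ∈ wcl S ↔
    StrongDual.toWeakDual f ∈ closure (StrongDual.toWeakDual '' S) :=
  Iff.rfl

theorem subset_wcl : S ⊆ wcl S :=
  fun _ hg => mem_wcl_iff.2 (subset_closure (mem_image_of_mem _ hg))

theorem apply_le_of_mem_wcl (hf : f ∈ wcl S) {x : X} {c : ℝ} (h : ∀ g ∈ S, g x ≤ c) : f x ≤ c :=
  closure_minimal (t := {g : WeakDual ℝ X | g x ≤ c}) (by rintro _ ⟨g, hg, rfl⟩; exact h g hg)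
    (isClosed_le (WeakDual.eval_continuous x) continuous_const) hf

theorem exists_dist_apply_lt_of_mem_wcl (hf : f ∈ wcl S) (x : X) {ε : ℝ} (hε : 0 < ε) :
    ∃ g ∈ S, dist (g x) (f x) < ε := by
  obtain ⟨_, hg, g, hgS, rfl⟩ := mem_closure_iff.1 (mem_wcl_iff.1 hf)
    ((fun g : WeakDual ℝ X => g x) ⁻¹' ball (f x) ε)
    (isOpen_ball.preimage (WeakDual.eval_continuous x)) (mem_ball_self hε)
  exact ⟨g, hgS, hg⟩

/-- Hahn–Banach in the weak* topology, whose continuous functionals are evaluations. -/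
theorem Convex.exists_apply_lt_of_notMem_wcl (hS : Convex ℝ S) (hf : f ∉ wcl S) :
    ∃ x : X, ∃ u : ℝ, (∀ g ∈ S, g x < u) ∧ u < f x := by
  have : LocallyConvexSpace ℝ (WeakDual ℝ X) := WeakBilin.locallyConvexSpace
  obtain ⟨φ, u, hφS, hφf⟩ := geometric_hahn_banach_closed_point
    (hS.linear_image StrongDual.toWeakDual.toLinearMap).closure isClosed_closure hf
  obtain ⟨x, rfl⟩ := LinearMap.dualEmbedding_surjective (topDualPairing ℝ X) φ
  exact ⟨x, u, fun g hg => hφS _ (subset_closure (mem_image_of_mem _ hg)), hφf⟩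

end WeakStar

section FiniteSums

theorem exists_sum_eq_convexCombination {I E : Type*} [DecidableEq I] [SeminormedAddCommGroup E]
    [NormedSpace ℝ E] {P : I → Set E} (hP : ∀ i, Convex ℝ (P i)) (hP0 : ∀ i, (0 : E) ∈ P i)
    {s t : Finset I} {x y : I → E} (hx : ∀ i ∈ s, x i ∈ P i) (hy : ∀ i ∈ t, y i ∈ P i)
    {a b : ℝ} (ha : 0 ≤ a) (hb : 0 ≤ b) (hab : a + b = 1) :
    ∃ z : I → E, (∀ i ∈ s ∪ t, z i ∈ P i) ∧
      ∑ i ∈ s ∪ t, z i = a • ∑ i ∈ s, x i + b • ∑ i ∈ t, y i ∧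
      ∑ i ∈ s ∪ t, ‖z i‖ ≤ a * ∑ i ∈ s, ‖x i‖ + b * ∑ i ∈ t, ‖y i‖ := by
  refine ⟨fun i => a • (if i ∈ s then x i else 0) + b • (if i ∈ t then y i else 0),
    fun i _ => hP i ?_ ?_ ha hb hab, ?_, ?_⟩
  · split_ifs with hi
    exacts [hx i hi, hP0 i]
  · split_ifs with hi
    exacts [hy i hi, hP0 i]
  · simp only [Finset.sum_add_distrib, ← Finset.smul_sum, Finset.sum_ite_mem,
      Finset.union_inter_cancel_left, Finset.union_inter_cancel_right]
  · calc ∑ i ∈ s ∪ t, ‖a • (if i ∈ s then x i else 0) + b • (if i ∈ t then y i else 0)‖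
        ≤ ∑ i ∈ s ∪ t, (a * ‖if i ∈ s then x i else 0‖ + b * ‖if i ∈ t then y i else 0‖) :=
          Finset.sum_le_sum fun i _ => (norm_add_le _ _).trans_eq (by
            rw [norm_smul, norm_smul, Real.norm_of_nonneg ha, Real.norm_of_nonneg hb])
      _ = a * ∑ i ∈ s, ‖x i‖ + b * ∑ i ∈ t, ‖y i‖ := by
          simp only [Finset.sum_add_distrib, ← Finset.mul_sum, apply_ite norm, norm_zero,
            Finset.sum_ite_mem, Finset.union_inter_cancel_left, Finset.union_inter_cancel_right]

variable {X : Type*} [NormedAddCommGroup X] [NormedSpace ℝ X] {I : Type*}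
  {P : I → Set (X →L[ℝ] ℝ)}

theorem convex_finSums (hP : ∀ i, Convex ℝ (P i)) (hP0 : ∀ i, (0 : X →L[ℝ] ℝ) ∈ P i) :
    Convex ℝ (finSums P) := by
  classical
  rintro _ ⟨s, x, hx, rfl⟩ _ ⟨t, y, hy, rfl⟩ a b ha hb hab
  obtain ⟨z, hz, hsum, -⟩ := exists_sum_eq_convexCombination hP hP0 hx hy ha hb hab
  exact ⟨s ∪ t, z, hz, hsum.symm⟩

theorem convex_boundedFinSums (hP : ∀ i, Convex ℝ (P i)) (hP0 : ∀ i, (0 : X →L[ℝ] ℝ) ∈ P i)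
    (c : ℝ) : Convex ℝ (boundedFinSums P c) := by
  classical
  rintro _ ⟨s, x, hx, rfl, hxc⟩ _ ⟨t, y, hy, rfl, hyc⟩ a b ha hb hab
  obtain ⟨z, hz, hsum, hnorm⟩ := exists_sum_eq_convexCombination hP hP0 hx hy ha hb hab
  refine ⟨s ∪ t, z, hz, hsum.symm, hnorm.trans ?_⟩
  calc a * ∑ i ∈ s, ‖x i‖ + b * ∑ i ∈ t, ‖y i‖ ≤ a * c + b * c := by gcongr
    _ = c := by rw [← add_mul, hab, one_mul]

theorem zero_mem_finSums : (0 : X →L[ℝ] ℝ) ∈ finSums P :=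
  ⟨∅, 0, by simp, by simp⟩

theorem zero_mem_boundedFinSums {c : ℝ} (hc : 0 ≤ c) : (0 : X →L[ℝ] ℝ) ∈ boundedFinSums P c :=
  ⟨∅, 0, by simp, by simp, by simpa using hc⟩

theorem mem_finSums_of_mem {i : I} {g : X →L[ℝ] ℝ} (hg : g ∈ P i) : g ∈ finSums P := by
  classical
  exact ⟨{i}, fun _ => g, by simpa using hg, by simp⟩

theorem mem_boundedFinSums_of_mem {i : I} {g : X →L[ℝ] ℝ} (hg : g ∈ P i) {c : ℝ}
    (hgc : ‖g‖ ≤ c) : g ∈ boundedFinSums P c := by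
  classical
  exact ⟨{i}, fun _ => g, by simpa using hg, by simp, by simpa using hgc⟩

end FiniteSums

section ConeFamily

variable {X : Type*} [NormedAddCommGroup X] [NormedSpace ℝ X] {I : Type*} {K : I → Set X}

theorem iInter_add_closedBall_subset_of_normal (hK : ∀ i, IsCone (K i)) {η : ℝ}
    (hN : ⋂ i, (K i + closedBall 0 η) ⊆ (⋂ i, K i) + closedBall 0 1) {δ : ℝ} (hδ : 0 < δ) :
    ⋂ i, (K i + closedBall 0 (δ * η)) ⊆ (⋂ i, K i) + closedBall 0 δ := by
  intro x hx
  have hx' : δ⁻¹ • x ∈ ⋂ i, (K i + closedBall 0 η) := mem_iInter.2 fun i => by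
    simpa [inv_mul_cancel_left₀ hδ.ne'] using
      (hK i).smul_mem_add_closedBall (inv_nonneg.2 hδ.le) (mem_iInter.1 hx i)
  simpa [smul_smul, mul_inv_cancel₀ hδ.ne'] using
    (IsCone.iInter hK).smul_mem_add_closedBall hδ.le (hN hx')

theorem closure_iInter_eq_of_normal (hK : ∀ i, IsCone (K i)) {η : ℝ} (hη : 0 < η)
    (hN : ⋂ i, (K i + closedBall 0 η) ⊆ (⋂ i, K i) + closedBall 0 1) :
    closure (⋂ i, K i) = ⋂ i, closure (K i) := by
  refine (subset_iInter fun i => closure_mono (iInter_subset _ i)).antisymm fun x hx => ?_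
  refine Metric.mem_closure_iff.2 fun ε hε => ?_
  have hx' : x ∈ ⋂ i, (K i + closedBall 0 (ε / 2 * η)) := mem_iInter.2 fun i =>
    closure_subset_add_closedBall _ (by positivity) (mem_iInter.1 hx i)
  obtain ⟨k, hk, b, hb, rfl⟩ :=
    iInter_add_closedBall_subset_of_normal hK hN (half_pos hε) hx'
  refine ⟨k, hk, ?_⟩
  rw [dist_eq_norm, add_sub_cancel_left]
  exact (mem_closedBall_zero_iff.1 hb).trans_lt (half_lt_self hε)

theorem wcl_finSums_dCone_subset :
    wcl (finSums fun i => dCone (K i)) ⊆ dCone (⋂ i, K i) := by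
  intro f hf k hk
  refine apply_le_of_mem_wcl hf ?_
  rintro _ ⟨s, x, hx, rfl⟩
  rw [sum_apply]
  exact Finset.sum_nonpos fun i hi => hx i hi k (mem_iInter.1 hk i)

theorem propG_of_normal (hK : ∀ i, IsCone (K i)) (hKc : ∀ i, Convex ℝ (K i))
    (hK0 : ∀ i, (0 : X) ∈ K i) {η : ℝ} (hη : 0 < η)
    (hN : ⋂ i, (K i + closedBall 0 η) ⊆ (⋂ i, K i) + closedBall 0 1) :
    propG (fun i => dCone (K i)) (η / 2) := by
  intro f hf
  rcases eq_or_ne f 0 with rfl | hf0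
  · exact subset_wcl (zero_mem_boundedFinSums (by simp))
  have hfpos : 0 < ‖f‖ := norm_pos_iff.2 hf0
  set c := 1 / (η / 2) * ‖f‖ with hc
  change f ∈ wcl (boundedFinSums _ c)
  by_contra hfc
  obtain ⟨x, u, hxu, hux⟩ := (convex_boundedFinSums (fun i => convex_dCone (K i))
    (fun i => zero_mem_dCone (K i)) c).exists_apply_lt_of_notMem_wcl hfc
  have hu : 0 < u := by simpa using hxu 0 (zero_mem_boundedFinSums (by positivity))
  have hx : x ∈ ⋂ i, (K i + closedBall 0 (u / ‖f‖ * η)) := mem_iInter.2 fun i => by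
    have hclosure := (hK i).mem_closure_add_closedBall_of_forall_apply_le (hKc i) (hK0 i)
      (by positivity) hu fun g hg hgc => (hxu g (mem_boundedFinSums_of_mem
        (P := fun i => dCone (K i)) hg hgc)).le
    convert closure_add_closedBall_subset _ (by positivity) hclosure using 3
    rw [hc]
    field_simp
  obtain ⟨k, hk, b, hb, rfl⟩ :=
    iInter_add_closedBall_subset_of_normal hK hN (by positivity) hx
  have := apply_le_of_mem_dCone_add_closedBall (wcl_finSums_dCone_subset hf) ⟨k, hk, b, hb, rfl⟩
  rw [mul_div_cancel₀ _ hfpos.ne'] at this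
  linarith

theorem dCone_iInter_subset_wcl_finSums (hK : ∀ i, IsCone (K i)) (hKc : ∀ i, Convex ℝ (K i))
    (hK0 : ∀ i, (0 : X) ∈ K i) (hCIP : closure (⋂ i, K i) = ⋂ i, closure (K i)) :
    dCone (⋂ i, K i) ⊆ wcl (finSums fun i => dCone (K i)) := by
  intro f hf
  by_contra hfS
  obtain ⟨x, u, hxu, hux⟩ := (convex_finSums (fun i => convex_dCone (K i))
    (fun i => zero_mem_dCone (K i))).exists_apply_lt_of_notMem_wcl hfS
  have hu : 0 < u := by simpa using hxu 0 zero_mem_finSums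
  have hx : x ∈ closure (⋂ i, K i) := by
    rw [hCIP, mem_iInter]
    refine fun i => (hK i).mem_closure_of_forall_mem_dCone (hKc i) (hK0 i) fun g hg => ?_
    exact (isCone_dCone (K i)).apply_nonpos_of_le (ContinuousLinearMap.apply ℝ ℝ x).toLinearMap
      (fun g hg => (hxu g (mem_finSums_of_mem (P := fun i => dCone (K i)) hg)).le) hg
  linarith [mem_dCone_closure hf x hx]

theorem apply_le_of_mem_boundedFinSums_dCone {c r : ℝ} (hr : 0 ≤ r) {g : X →L[ℝ] ℝ}
    (hg : g ∈ boundedFinSums (fun i => dCone (K i)) c) {x : X}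
    (hx : x ∈ ⋂ i, (K i + closedBall 0 r)) : g x ≤ c * r := by
  obtain ⟨s, y, hy, rfl, hyc⟩ := hg
  calc (∑ i ∈ s, y i) x = ∑ i ∈ s, y i x := sum_apply ..
    _ ≤ ∑ i ∈ s, ‖y i‖ * r := Finset.sum_le_sum fun i hi =>
        apply_le_of_mem_dCone_add_closedBall (hy i hi) (mem_iInter.1 hx i)
    _ = (∑ i ∈ s, ‖y i‖) * r := (Finset.sum_mul ..).symm
    _ ≤ c * r := by gcongr

theorem normal_of_propG (hK : ∀ i, IsCone (K i)) (hKc : ∀ i, Convex ℝ (K i))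
    (hK0 : ∀ i, (0 : X) ∈ K i) (hCIP : closure (⋂ i, K i) = ⋂ i, closure (K i)) {η : ℝ}
    (hη : 0 < η) (hG : propG (fun i => dCone (K i)) η) :
    ⋂ i, (K i + closedBall 0 (η / 2)) ⊆ (⋂ i, K i) + closedBall 0 1 := by
  intro x hx
  by_contra hxK
  have h0 : (0 : X) ∈ ⋂ i, K i := mem_iInter.2 hK0
  obtain ⟨f, hfU, hfx⟩ := exists_mem_pol_apply_eq_one isOpen_ball.add_left
    ((convex_iInter hKc).add (convex_ball 0 1)) ⟨0, h0, 0, mem_ball_self one_pos, zero_add 0⟩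
    fun h => hxK (add_subset_add_left ball_subset_closedBall h)
  have hfK : f ∈ dCone (⋂ i, K i) :=
    (IsCone.iInter hK).pol_subset_dCone (pol_anti (subset_add_left _ (mem_ball_self one_pos)) hfU)
  have hf1 : ‖f‖ ≤ 1 := by
    simpa using norm_le_of_mem_pol_ball one_pos (pol_anti (subset_add_right _ h0) hfU)
  obtain ⟨g, hg, hgf⟩ := exists_dist_apply_lt_of_mem_wcl
    (hG f (dCone_iInter_subset_wcl_finSums hK hKc hK0 hCIP hfK)) x (by norm_num : (0 : ℝ) < 1 / 4)
  have hgx : g x ≤ 1 / η * ‖f‖ * (η / 2) :=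
    apply_le_of_mem_boundedFinSums_dCone (by positivity) hg hx
  rw [Real.dist_eq, hfx, abs_lt] at hgf
  field_simp at hgx
  linarith

end ConeFamily

theorem stmt15_general {X : Type*} [NormedAddCommGroup X] [NormedSpace ℝ X]
    {I : Type*} (K : I → Set X)
    (hcone_smul : ∀ i, ∀ t : ℝ, 0 ≤ t → t • K i ⊆ K i)
    (hcone_add : ∀ i, K i + K i ⊆ K i) (h0 : ∀ i, (0 : X) ∈ K i) :
    (∃ η > (0:ℝ),
        (⋂ i, (K i + η • closedBall (0:X) 1)) ⊆ (⋂ i, K i) + closedBall (0:X) 1) ↔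
      (closure (⋂ i, K i) = (⋂ i, closure (K i)) ∧
        ∃ η > (0:ℝ), propG (fun i => dCone (K i)) η) := by
  have hK : ∀ i, IsCone (K i) := hcone_smul
  have hKc : ∀ i, Convex ℝ (K i) := fun i => (hK i).convex (hcone_add i)
  have hball : ∀ {η : ℝ}, 0 < η → η • closedBall (0 : X) 1 = closedBall 0 η := fun hη => by
    rw [smul_unitClosedBall, Real.norm_of_nonneg hη.le]
  constructor
  · rintro ⟨η, hη, hN⟩
    rw [hball hη] at hN
    exact ⟨closure_iInter_eq_of_normal hK hη hN, η / 2, half_pos hη,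
      propG_of_normal hK hKc h0 hη hN⟩
  · rintro ⟨hCIP, η, hη, hG⟩
    refine ⟨η / 2, half_pos hη, ?_⟩
    rw [hball (half_pos hη)]
    exact normal_of_propG hK hKc h0 hCIP hη hG

theorem stmt15 {X : Type*} [NormedAddCommGroup X] [NormedSpace ℝ X] [CompleteSpace X]
    {I : Type*} [Nonempty I] (K : I → Set X)
    (hcone_smul : ∀ i, ∀ t : ℝ, 0 ≤ t → t • K i ⊆ K i)
    (hcone_add : ∀ i, K i + K i ⊆ K i) (h0 : ∀ i, (0 : X) ∈ K i) :
    (∃ η > (0:ℝ),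
        (⋂ i, (K i + η • closedBall (0:X) 1)) ⊆ (⋂ i, K i) + closedBall (0:X) 1) ↔
      (closure (⋂ i, K i) = (⋂ i, closure (K i)) ∧
        ∃ η > (0:ℝ), propG (fun i => dCone (K i)) η) :=
  stmt15_general K hcone_smul hcone_add h0
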